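/- arXiv:2208.13612 — 2 statements merged into one kernel-verified Lean document; each statement's English description precedes it below -/
import Mathlib

section
/- If a function f : ℤ → ℤ satisfies f(t) - f(t-1) ∈ {0, 1} for all t, and f(t) - f(s) ∈ {t - s, t - s - 1} for all s ≤ t, then either f(t) = f(t-1) + 1 for all t (f is affine of slope 1), or there exists a unique θ ∈ ℤ such that f(θ) = f(θ-1) and f(t) = f(t-1) + 1 for all t ≠ θ. -/
/-- Abstract combinatorial core of Proposition 1.19: a ℤ-valued function on ℤ
with steps in {0,1} and f(t) - f(s) ∈ {t-s, t-s-1} for s ≤ t is either affine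
of slope 1 or has a single stationary point θ. -/
theorem stmt_1 (f : ℤ → ℤ)
    (hstep : ∀ t : ℤ, f t - f (t - 1) = 0 ∨ f t - f (t - 1) = 1)
    (hdiff : ∀ s t : ℤ, s ≤ t → f t - f s = t - s ∨ f t - f s = t - s - 1) :
    (∀ t : ℤ, f t = f (t - 1) + 1) ∨
      (∃! θ : ℤ, f θ = f (θ - 1) ∧ ∀ t : ℤ, t ≠ θ → f t = f (t - 1) + 1) := by
  by_cases h : ∀ t : ℤ, f t = f (t - 1) + 1
  · left; exact h
  · right
    push_neg at h
    obtain ⟨θ, hθ⟩ := h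
    have hθ0 : f θ = f (θ - 1) := by rcases hstep θ with h1 | h1 <;> omega
    have key : ∀ a b : ℤ, a < b → f a = f (a - 1) → f b = f (b - 1) → False := by
      intro a b hab ha hb
      have h1 := hdiff (a - 1) b (by omega)
      have h2 := hdiff a (b - 1) (by omega)
      omega
    refine ⟨θ, ⟨hθ0, ?_⟩, ?_⟩
    · intro t ht
      rcases hstep t with h1 | h1
      · exfalso
        rcases lt_or_gt_of_ne ht with h' | h'
        · exact key t θ h' (by omega) hθ0
        · exact key θ t h' hθ0 (by omega)
      · omega
    · rintro y ⟨hy, -⟩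
      by_contra hne
      rcases lt_or_gt_of_ne hne with h' | h'
      · exact key y θ h' hy hθ0
      · exact key θ y h' hθ0 hy
end

section
/- Let ν be a slice-torus invariant with ν(C_{2,1}(K)) - ν(C_{2,-1}(K)) ∈ {1, 0} for all knots K (stationary-point property of (2,n)-cables). If K has order two in the smooth concordance group (K # K is slice), then ν(C_{2,1}(K)) = ν(C_{2,-1}(K)) = 0. -/
/-- Proposition 1.23: if ν(C_{2,1}(K)) - ν(C_{2,-1}(K)) ∈ {1,0} for all knots,
ν is a concordance invariant, -C_{2,1}(K) = C_{2,-1}(-K), and K is concordant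
to -K (order two), then ν(C_{2,1}(K)) = ν(C_{2,-1}(K)) = 0. -/
theorem stmt_10 {Knot : Type*}
    (ν : Knot → ℤ) (C1 Cm1 : Knot → Knot) (neg : Knot → Knot)
    (conc : Knot → Knot → Prop)
    (hdiff : ∀ K : Knot, ν (C1 K) - ν (Cm1 K) = 1 ∨ ν (C1 K) - ν (Cm1 K) = 0)
    (hconc : ∀ K J : Knot, conc K J → ν K = ν J)
    (hconc_cable : ∀ K J : Knot, conc K J → conc (Cm1 K) (Cm1 J))
    (hneg : ∀ K : Knot, ν (neg K) = -ν K)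
    (hcable_neg : ∀ K : Knot, ν (Cm1 (neg K)) = ν (neg (C1 K)))
    (K : Knot) (horder : conc K (neg K)) :
    ν (C1 K) = 0 ∧ ν (Cm1 K) = 0 := by
  have h1 : ν (Cm1 K) = -ν (C1 K) := by
    rw [hconc _ _ (hconc_cable _ _ horder), hcable_neg, hneg]
  rcases hdiff K with h | h <;> constructor <;> omega
end
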